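/- Let T and T' be quasisimilar operators of class C₀, with T' of finite cyclic multiplicity n. Then T also has cyclic multiplicity at most n; in particular quasisimilar C₀ operators of finite multiplicity have equal multiplicities. -/
import Mathlib


open Metric Filter
open scoped InnerProductSpace ComplexConjugate

/-- `H^∞`: the algebra of bounded analytic functions on the open unit disk. -/
noncomputable def Hinf : Subalgebra ℂ (ℂ → ℂ) where
  carrier := {f | DifferentiableOn ℂ f (ball 0 1) ∧ ∃ C : ℝ, ∀ z ∈ ball (0:ℂ) 1, ‖f z‖ ≤ C}
  mul_mem' := by
    rintro f g ⟨hf, C, hC⟩ ⟨hg, D, hD⟩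
    refine ⟨hf.mul hg, |C| * |D|, fun z hz => ?_⟩
    calc ‖(f * g) z‖ = ‖f z‖ * ‖g z‖ := by simp
    _ ≤ |C| * |D| := mul_le_mul ((hC z hz).trans (le_abs_self C))
        ((hD z hz).trans (le_abs_self D)) (norm_nonneg _) (abs_nonneg _)
  one_mem' := ⟨differentiableOn_const 1, 1, fun z _ => by simp⟩
  add_mem' := by
    rintro f g ⟨hf, C, hC⟩ ⟨hg, D, hD⟩
    exact ⟨hf.add hg, C + D, fun z hz =>
      (norm_add_le _ _).trans (add_le_add (hC z hz) (hD z hz))⟩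
  zero_mem' := ⟨differentiableOn_const 0, 0, fun z _ => by simp⟩
  algebraMap_mem' := fun c =>
    ⟨differentiableOn_const c, ‖c‖, fun z _ => by simp [Algebra.algebraMap_eq_smul_one]⟩

/-- The coordinate function `z`, as an element of `H^∞`. -/
noncomputable def Hinf.z : Hinf :=
  ⟨fun w => w, differentiableOn_id, 1, fun w hw => le_of_lt (by
    simpa [mem_ball, dist_zero_right] using hw)⟩

/-- The commutant of a bounded operator. -/
def commutant {H : Type*} [NormedAddCommGroup H] [InnerProductSpace ℂ H]
    (T : H →L[ℂ] H) : Set (H →L[ℂ] H) := {A | A ∘L T = T ∘L A}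

/-- `F` is a cyclic set for `T`. -/
def IsCyclicSet {H : Type*} [NormedAddCommGroup H] [InnerProductSpace ℂ H]
    (T : H →L[ℂ] H) (F : Set H) : Prop :=
  (Submodule.span ℂ {x : H | ∃ f ∈ F, ∃ k : ℕ, (T ^ k) f = x}).topologicalClosure = ⊤

/-- The cyclic multiplicity of `T`: the least cardinality of a cyclic set (as an `ℕ∞`). -/
noncomputable def cyclicMultiplicity {H : Type*} [NormedAddCommGroup H]
    [InnerProductSpace ℂ H] (T : H →L[ℂ] H) : ℕ∞ :=
  ⨅ (F : Finset H) (_ : IsCyclicSet T (F : Set H)), (F.card : ℕ∞)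


open scoped Classical in
lemma cyclic_image_aux {H H' : Type*}
    [NormedAddCommGroup H] [InnerProductSpace ℂ H]
    [NormedAddCommGroup H'] [InnerProductSpace ℂ H']
    (T : H →L[ℂ] H) (T' : H' →L[ℂ] H')
    (W' : H' →L[ℂ] H) (hW'dense : DenseRange W')
    (hW' : W' ∘L T' = T ∘L W')
    (F' : Finset H') (hF' : IsCyclicSet T' (F' : Set H')) :
    IsCyclicSet T ((F'.image W' : Finset H) : Set H) := by
  have hk : ∀ (k : ℕ) (y : H'), (T ^ k) (W' y) = W' ((T' ^ k) y) := by
    intro k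
    induction k with
    | zero => simp
    | succ k ih =>
      intro y
      have h1 : W' (T' y) = T (W' y) := DFunLike.congr_fun hW' y
      calc (T ^ (k+1)) (W' y) = (T ^ k) (T (W' y)) := by
            rw [pow_succ]; rfl
        _ = (T ^ k) (W' (T' y)) := by rw [h1]
        _ = W' ((T' ^ k) (T' y)) := ih _
        _ = W' ((T' ^ (k+1)) y) := by rw [pow_succ]; rfl
  set S' : Set H' := {x : H' | ∃ f ∈ (F' : Set H'), ∃ k : ℕ, (T' ^ k) f = x} with hS'
  set S : Set H := {x : H | ∃ f ∈ ((F'.image W' : Finset H) : Set H), ∃ k : ℕ, (T ^ k) f = x}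
    with hS
  have himg : W' '' S' ⊆ S := by
    rintro x ⟨y, ⟨f, hf, k, hky⟩, rfl⟩
    exact ⟨W' f, by simpa using ⟨f, hf, rfl⟩, k, by rw [hk k f, hky]⟩
  have hmap : (Submodule.span ℂ S').map (W' : H' →ₗ[ℂ] H) ≤ Submodule.span ℂ S := by
    rw [Submodule.map_span]
    exact Submodule.span_mono himg
  have htop : ((Submodule.span ℂ S').map (W' : H' →ₗ[ℂ] H)).topologicalClosure = ⊤ :=
    hW'dense.topologicalClosure_map_submodule hF'
  have := Submodule.topologicalClosure_mono hmap
  rw [htop] at this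
  exact top_le_iff.mp this

open scoped Classical in
lemma mult_le_aux {H H' : Type*}
    [NormedAddCommGroup H] [InnerProductSpace ℂ H]
    [NormedAddCommGroup H'] [InnerProductSpace ℂ H']
    (T : H →L[ℂ] H) (T' : H' →L[ℂ] H')
    (W' : H' →L[ℂ] H) (hW'dense : DenseRange W')
    (hW' : W' ∘L T' = T ∘L W') :
    cyclicMultiplicity T ≤ cyclicMultiplicity T' := by
  have hrw : cyclicMultiplicity T' =
      ⨅ (G : Finset H') (_ : IsCyclicSet T' (G : Set H')), (G.card : ℕ∞) := rfl
  rw [hrw]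
  refine le_iInf₂ fun F' hF' => ?_
  calc cyclicMultiplicity T ≤ ((F'.image W').card : ℕ∞) := by
        have hrw2 : cyclicMultiplicity T =
            ⨅ (G : Finset H) (_ : IsCyclicSet T (G : Set H)), (G.card : ℕ∞) := rfl
        rw [hrw2]
        exact iInf_le_of_le (F'.image W')
          (iInf_le _ (cyclic_image_aux T T' W' hW'dense hW' F' hF'))
    _ ≤ (F'.card : ℕ∞) := Nat.cast_le.mpr (Finset.card_image_le)

/-- Let `T ∼ T'` be quasisimilar operators of class `C₀`, with `T'` of finite
cyclic multiplicity `n` (witnessed by a cyclic set `F'` of cardinality `n`). Then `T` has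
cyclic multiplicity at most `n`; in particular, quasisimilar `C₀` operators have equal
cyclic multiplicities. -/
theorem stmt19 {H H' : Type*}
    [NormedAddCommGroup H] [InnerProductSpace ℂ H] [CompleteSpace H]
    [NormedAddCommGroup H'] [InnerProductSpace ℂ H'] [CompleteSpace H']
    (T : H →L[ℂ] H) (T' : H' →L[ℂ] H') (hT : ‖T‖ ≤ 1) (hT' : ‖T'‖ ≤ 1)
    (Φ : Hinf →ₐ[ℂ] (H →L[ℂ] H)) (Φ' : Hinf →ₐ[ℂ] (H' →L[ℂ] H'))
    (hΦz : Φ Hinf.z = T) (hΦ'z : Φ' Hinf.z = T')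
    (hC0 : ∃ u : Hinf, u ≠ 0 ∧ Φ u = 0) (hC0' : ∃ u : Hinf, u ≠ 0 ∧ Φ' u = 0)
    -- quasisimilarity: quasiaffinities in both directions
    (W : H →L[ℂ] H') (hWinj : Function.Injective W) (hWdense : DenseRange W)
    (hW : W ∘L T = T' ∘L W)
    (W' : H' →L[ℂ] H) (hW'inj : Function.Injective W') (hW'dense : DenseRange W')
    (hW' : W' ∘L T' = T ∘L W')
    (n : ℕ) (F' : Finset H') (hF' : IsCyclicSet T' (F' : Set H')) (hcard : F'.card = n) :
    (∃ F : Finset H, IsCyclicSet T (F : Set H) ∧ F.card ≤ n) ∧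
      cyclicMultiplicity T = cyclicMultiplicity T' := by
  classical
  constructor
  · exact ⟨F'.image W', cyclic_image_aux T T' W' hW'dense hW' F' hF',
      hcard ▸ Finset.card_image_le⟩
  · exact le_antisymm (mult_le_aux T T' W' hW'dense hW')
      (mult_le_aux T' T W hWdense hW)
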